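/- Let f : (X, ζ_X, E) → (Y, ζ_Y, E) be a soft function between soft convex spaces. Then f is soft convex to convex (images of members of ζ_X lie in ζ_Y) if and only if co_Y(f(Ω)) ⊑ f(co_X(Ω)) for every soft set Ω on X. -/

import Mathlib

def IsSoftConvexStructure {X E : Type*} (ζ : Set (E → Set X)) : Prop :=
  (fun _ : E => (∅ : Set X)) ∈ ζ ∧
  (fun _ : E => (Set.univ : Set X)) ∈ ζ ∧
  (∀ S ⊆ ζ, (fun e => ⋂ Ω ∈ S, Ω e) ∈ ζ) ∧
  (∀ S ⊆ ζ, DirectedOn (· ≤ ·) S → (fun e => ⋃ Ω ∈ S, Ω e) ∈ ζ)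

def softHull {X E : Type*} (ζ : Set (E → Set X)) (Ω : E → Set X) : E → Set X :=
  fun e => ⋂ O ∈ {O | O ∈ ζ ∧ Ω ≤ O}, O e

section SoftHull

variable {X E : Type*} {ζ : Set (E → Set X)} {Ω O : E → Set X}

lemma le_softHull (ζ : Set (E → Set X)) (Ω : E → Set X) : Ω ≤ softHull ζ Ω :=
  fun _ _ hx => Set.mem_iInter₂.2 fun _ hO => hO.2 _ hx

lemma softHull_le (hO : O ∈ ζ) (hle : Ω ≤ O) : softHull ζ Ω ≤ O :=
  fun _ _ hx => Set.mem_iInter₂.1 hx O ⟨hO, hle⟩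

lemma softHull_mem (hζ : ∀ S ⊆ ζ, (fun e => ⋂ Ω ∈ S, Ω e) ∈ ζ) (Ω : E → Set X) :
    softHull ζ Ω ∈ ζ :=
  hζ _ fun _ hO => hO.1

lemma softHull_eq_self (hΩ : Ω ∈ ζ) : softHull ζ Ω = Ω :=
  le_antisymm (softHull_le hΩ le_rfl) (le_softHull ζ Ω)

lemma mem_of_softHull_le (hζ : ∀ S ⊆ ζ, (fun e => ⋂ Ω ∈ S, Ω e) ∈ ζ)
    (h : softHull ζ Ω ≤ Ω) : Ω ∈ ζ := by
  rw [← le_antisymm h (le_softHull ζ Ω)]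
  exact softHull_mem hζ Ω

end SoftHull

/-- f is soft convex to convex iff co_Y(f(Ω)) ⊑ f(co_X(Ω)) for every soft set Ω. -/
theorem scc_iff_hull_image {X Y E : Type*} (ζX : Set (E → Set X)) (ζY : Set (E → Set Y))
    (hζX : IsSoftConvexStructure ζX) (hζY : IsSoftConvexStructure ζY) (f : X → Y) :
    (∀ Ω ∈ ζX, (fun e => f '' Ω e) ∈ ζY) ↔
    (∀ Ω : E → Set X,
      softHull ζY (fun e => f '' Ω e) ≤ (fun e => f '' softHull ζX Ω e)) := by
  constructor
  · intro hscc Ω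
    have hconvex : (fun e => f '' softHull ζX Ω e) ∈ ζY := hscc _ (softHull_mem hζX.2.2.1 Ω)
    exact softHull_le hconvex fun e => Set.image_mono (le_softHull ζX Ω e)
  · intro hhull Ω hΩ
    apply mem_of_softHull_le hζY.2.2.1
    simpa only [softHull_eq_self hΩ] using hhull Ω
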